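/- arXiv:2110.13975 — 7 statements merged into one kernel-verified Lean document; each statement's English description precedes it below -/
import Mathlib

section
/- Let n ≥ 2 and let M be an n×n real cyclic lower bidiagonal matrix (nonzero entries only on the diagonal, the subdiagonal, and position (1,n)). For any index sets α, β ⊆ {1,…,n} with |α| = |β| < n, the minor M[α|β] has at most one nonzero term in its permutation expansion; in particular M[α|β] equals ε·∏ of some entries of M for a sign ε ∈ {−1, +1}, or is zero. -/
open Finset

open Fin.NatCast in
lemma aux_chain {n k : ℕ} (hn : 2 ≤ n) [NeZero n] (f s t : Fin k → Fin n)
    (hf : Function.Injective f)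
    (hst : Set.range s = Set.range t)
    (hs : ∀ l, s l = f l ∨ s l = f l - 1)
    (ht : ∀ l, t l = f l ∨ t l = f l - 1)
    (htinj : Function.Injective t)
    (l₀ : Fin k) (hs0 : s l₀ = f l₀) (ht0 : t l₀ = f l₀ - 1) :
    ∀ m : ℕ, ∃ l, f l = f l₀ - (m : Fin n) ∧ s l = f l ∧ t l = f l - 1 := by
  have hone : (1 : Fin n) ≠ 0 := by
    have : (1 : Fin n).val = 1 := by
      simp [Fin.val_one, Nat.mod_eq_of_lt (lt_of_lt_of_le one_lt_two hn)]
    intro h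
    rw [h] at this
    simp at this
  have hsub : ∀ x : Fin n, x - 1 ≠ x := by
    intro x h
    exact hone (by rwa [sub_eq_self] at h)
  intro m
  induction m with
  | zero => exact ⟨l₀, by simp, hs0, ht0⟩
  | succ m ih =>
    obtain ⟨l, hfl, hsl, htl⟩ := ih
    have hmem : f l - 1 ∈ Set.range s := by
      rw [hst]; exact ⟨l, htl⟩
    obtain ⟨l', hl'⟩ := hmem
    have hne : l' ≠ l := by
      intro h
      rw [h, hsl] at hl'
      exact hsub (f l) hl'.symm
    rcases hs l' with h1 | h1
    · have hfl' : f l' = f l - 1 := by rw [← h1, hl']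
      rcases ht l' with h2 | h2
      · exfalso
        apply hne
        apply htinj
        rw [h2, hfl', htl]
      · refine ⟨l', ?_, h1, h2⟩
        rw [hfl', hfl]
        push_cast
        rw [sub_sub]
    · exfalso
      have : f l' - 1 = f l - 1 := by rw [← h1, hl']
      have : f l' = f l := by
        have := congrArg (· + 1) this
        simpa [sub_add_cancel] using this
      exact hne (hf this)

open Fin.NatCast in
lemma aux_uniq {n k : ℕ} (hn : 2 ≤ n) [NeZero n] (hk : k < n) (f s t : Fin k → Fin n)
    (hf : Function.Injective f)
    (hst : Set.range s = Set.range t)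
    (hs : ∀ l, s l = f l ∨ s l = f l - 1)
    (ht : ∀ l, t l = f l ∨ t l = f l - 1)
    (htinj : Function.Injective t)
    (l₀ : Fin k) (hs0 : s l₀ = f l₀) (ht0 : t l₀ = f l₀ - 1) : False := by
  have key := aux_chain hn f s t hf hst hs ht htinj l₀ hs0 ht0
  have hsurj : Function.Surjective f := by
    intro x
    obtain ⟨l, hl, -, -⟩ := key (f l₀ - x).val
    refine ⟨l, ?_⟩
    rw [hl, Fin.cast_val_eq_self, sub_sub_cancel]
  have := Fintype.card_le_of_surjective f hsurj
  simp at this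
  omega

/-- Any minor of size `< n` of a cyclic lower bidiagonal matrix has at most one nonzero
term in its permutation expansion: it is zero, or a single signed product of entries. -/
theorem stmt_1 (n k : ℕ) (hn : 2 ≤ n) [NeZero n] (M : Matrix (Fin n) (Fin n) ℝ)
    (hM : ∀ i j : Fin n, M i j ≠ 0 → j = i ∨ i = j + 1)
    (α β : Finset (Fin n)) (hα : α.card = k) (hβ : β.card = k) (hk : k < n) :
    (M.submatrix (α.orderEmbOfFin hα) (β.orderEmbOfFin hβ)).det = 0 ∨
      ∃ (ε : ℝ) (σ : Equiv.Perm (Fin k)), (ε = 1 ∨ ε = -1) ∧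
        (M.submatrix (α.orderEmbOfFin hα) (β.orderEmbOfFin hβ)).det
          = ε * ∏ l : Fin k, M (α.orderEmbOfFin hα l) (β.orderEmbOfFin hβ (σ l)) := by
  set f : Fin k → Fin n := ⇑(α.orderEmbOfFin hα) with hfdef
  set g : Fin k → Fin n := ⇑(β.orderEmbOfFin hβ) with hgdef
  set A := M.submatrix (α.orderEmbOfFin hα) (β.orderEmbOfFin hβ) with hA
  have hfin : Function.Injective f := (α.orderEmbOfFin hα).injective
  have hgin : Function.Injective g := (β.orderEmbOfFin hβ).injective
  have hdet : A.det = ∑ σ : Equiv.Perm (Fin k),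
      (Equiv.Perm.sign σ : ℤ) * ∏ l, A l (σ l) := by
    rw [← Matrix.det_transpose, Matrix.det_apply']
    simp [Matrix.transpose_apply]
  -- each nonzero entry pattern
  have hpat : ∀ (σ : Equiv.Perm (Fin k)), (∏ l, A l (σ l)) ≠ 0 →
      ∀ l, g (σ l) = f l ∨ g (σ l) = f l - 1 := by
    intro σ hσ l
    have hne : A l (σ l) ≠ 0 := by
      intro h
      exact hσ (Finset.prod_eq_zero (Finset.mem_univ l) h)
    rcases hM (f l) (g (σ l)) hne with h | h
    · exact Or.inl h
    · right
      rw [eq_sub_iff_add_eq, ← h]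
  have hrange : ∀ (σ : Equiv.Perm (Fin k)), Set.range (fun l => g (σ l)) = Set.range g := by
    intro σ
    exact Set.range_comp g σ ▸ by rw [Equiv.range_eq_univ, Set.image_univ]
  have uniq : ∀ σ τ : Equiv.Perm (Fin k), (∏ l, A l (σ l)) ≠ 0 →
      (∏ l, A l (τ l)) ≠ 0 → σ = τ := by
    intro σ τ hσ hτ
    by_contra hne
    have : ∃ l₀, σ l₀ ≠ τ l₀ := by
      by_contra h
      push_neg at h
      exact hne (Equiv.ext h)
    obtain ⟨l₀, hl₀⟩ := this
    have hgne : g (σ l₀) ≠ g (τ l₀) := fun h => hl₀ (hgin h)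
    have hsp := hpat σ hσ
    have htp := hpat τ hτ
    have hst : Set.range (fun l => g (σ l)) = Set.range (fun l => g (τ l)) := by
      rw [hrange, hrange]
    have hsinj : Function.Injective (fun l => g (σ l)) := hgin.comp σ.injective
    have htinj : Function.Injective (fun l => g (τ l)) := hgin.comp τ.injective
    rcases hsp l₀ with h1 | h1 <;> rcases htp l₀ with h2 | h2
    · exact hgne (h1.trans h2.symm)
    · exact aux_uniq hn hk f (fun l => g (σ l)) (fun l => g (τ l))
        hfin hst hsp htp htinj l₀ h1 h2
    · exact aux_uniq hn hk f (fun l => g (τ l)) (fun l => g (σ l))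
        hfin hst.symm htp hsp hsinj l₀ h2 h1
    · exact hgne (h1.trans h2.symm)
  by_cases hex : ∃ σ : Equiv.Perm (Fin k), (∏ l, A l (σ l)) ≠ 0
  · obtain ⟨σ₀, hσ₀⟩ := hex
    right
    refine ⟨((Equiv.Perm.sign σ₀ : ℤ) : ℝ), σ₀, ?_, ?_⟩
    · rcases Int.units_eq_one_or (Equiv.Perm.sign σ₀) with h | h <;> rw [h] <;> simp
    · rw [hdet]
      rw [Finset.sum_eq_single_of_mem σ₀ (Finset.mem_univ σ₀)]
      · rfl
      · intro τ _ hτ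
        by_cases h : (∏ l, A l (τ l)) = 0
        · rw [h, mul_zero]
        · exact absurd (uniq τ σ₀ h hσ₀) hτ
  · left
    push_neg at hex
    rw [hdet]
    apply Finset.sum_eq_zero
    intro σ _
    rw [hex σ, mul_zero]
end

section
/- Let n ≥ 2, let a_1,…,a_n and b_1,…,b_n be positive integers, and let Γ be the n×n matrix with Γ(i,i) = −a_i, Γ(i+1,i) = −b_{i+1} for i = 1,…,n−1, Γ(1,n) = −b_1, and all other entries zero (the stoichiometric matrix of an all-sequestration closed CST), and let Γ_l be the matrix with Γ_l(i,j) = |Γ(i,j)|. Then det Γ = (−1)^n (∏_{i=1}^n a_i − (−1)^n ∏_{i=1}^n b_i) and det Γ_l = ∏_{i=1}^n a_i + (−1)^{n+1} ∏_{i=1}^n b_i; in particular, if n is even and ∏ a_i ≠ ∏ b_i, then det Γ = ∏ a_i − ∏ b_i = det Γ_l and det Γ · det Γ_l = (∏ a_i − ∏ b_i)² > 0. -/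
open Finset

open Fin.NatCast in
lemma det_cyc (m : ℕ) (hm : 1 ≤ m) (d e : Fin (m+1) → ℝ)
    (M : Matrix (Fin (m+1)) (Fin (m+1)) ℝ)
    (hM : ∀ i j, M i j = if i = j then d i else if i = j + 1 then e i else 0) :
    M.det = ∏ i, d i + (-1 : ℝ) ^ m * ∏ i, e i := by
  have h10 : (1 : Fin (m+1)) ≠ 0 := by
    simp [Fin.ext_iff, Fin.val_one', Nat.mod_eq_of_lt (by omega : 1 < m + 1)]
  have hsucc : ∀ i : Fin (m+1), i + 1 ≠ i := by
    intro i h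
    have h2 := congrArg Fin.val h
    simp only [Fin.add_def, Fin.val_one', Fin.val_mk] at h2
    rw [Nat.mod_eq_of_lt (show 1 < m+1 by omega)] at h2
    have hi := i.isLt
    rcases Nat.lt_or_ge (i.val + 1) (m+1) with hl | hl
    · rw [Nat.mod_eq_of_lt hl] at h2; omega
    · have : i.val + 1 = m + 1 := by omega
      rw [this, Nat.mod_self] at h2; omega
  have hne : (1 : Equiv.Perm (Fin (m+1))) ≠ finRotate (m+1) := by
    intro h
    have h0 := congrFun (congrArg DFunLike.coe h) 0
    rw [finRotate_succ_apply, Equiv.Perm.coe_one, id] at h0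
    exact hsucc 0 h0.symm
  rw [Matrix.det_apply]
  rw [← Finset.sum_subset (Finset.subset_univ ({1, finRotate (m+1)} : Finset (Equiv.Perm (Fin (m+1)))))]
  · rw [Finset.sum_pair hne]
    have t1 : ∏ i, M ((1 : Equiv.Perm (Fin (m+1))) i) i = ∏ i, d i := by
      apply Finset.prod_congr rfl; intro i _; simp [hM]
    have t2 : ∏ i, M ((finRotate (m+1)) i) i = ∏ i, e i := by
      rw [show (∏ i, M ((finRotate (m+1)) i) i) = ∏ i, e (i + 1) by
        apply Finset.prod_congr rfl; intro i _
        simp [hM, finRotate_succ_apply, hsucc i]]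
      exact Equiv.prod_comp (Equiv.addRight 1) e
    rw [t1, t2, Equiv.Perm.sign_one, sign_finRotate]
    simp [Units.smul_def]
  · intro σ _ hσ
    simp only [Finset.mem_insert, Finset.mem_singleton] at hσ
    push_neg at hσ
    obtain ⟨hσ1, hσc⟩ := hσ
    by_cases hall : ∀ i, σ i = i ∨ σ i = i + 1
    · by_cases hfix : ∀ i, σ i = i
      · exact absurd (Equiv.ext hfix) hσ1
      · push_neg at hfix
        obtain ⟨i0, hi0⟩ := hfix
        have hi0' : σ i0 = i0 + 1 := (hall i0).resolve_left hi0
        have step : ∀ i : Fin (m+1), σ i = i + 1 → σ (i + 1) = i + 1 + 1 := by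
          intro i hi
          rcases hall (i + 1) with h | h
          · exfalso
            have : i + 1 = i := σ.injective (by rw [hi, h])
            exact hsucc i this
          · exact h
        have key : ∀ k : ℕ, σ (i0 + (k : Fin (m+1))) = i0 + (k : Fin (m+1)) + 1 := by
          intro k
          induction k with
          | zero => simpa using hi0'
          | succ k ih =>
            have : ((k + 1 : ℕ) : Fin (m+1)) = (k : Fin (m+1)) + 1 := by push_cast; ring
            rw [this, ← add_assoc]
            exact step _ ih
        have hall' : ∀ j : Fin (m+1), σ j = j + 1 := by
          intro j
          have hj : i0 + (((j - i0).val : ℕ) : Fin (m+1)) = j := by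
            rw [Fin.cast_val_eq_self]; abel
          rw [← hj]; exact key _
        exact absurd (Equiv.ext (fun j => by rw [hall' j, finRotate_succ_apply])) hσc
    · push_neg at hall
      obtain ⟨i, h1, h2⟩ := hall
      have : M (σ i) i = 0 := by rw [hM]; simp [h1, h2]
      rw [Finset.prod_eq_zero (f := fun j => M (σ j) j) (Finset.mem_univ i) this, smul_zero]

/-- Determinant of the stoichiometric matrix of an all-sequestration closed CST,
the determinant of its source matrix (entrywise absolute value), and injectivity
under mass action in the even case. -/
theorem stmt_3 (n : ℕ) (hn : 2 ≤ n) [NeZero n] (a b : Fin n → ℕ)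
    (ha : ∀ i, 0 < a i) (hb : ∀ i, 0 < b i)
    (Γ Γl : Matrix (Fin n) (Fin n) ℝ)
    (hΓ : ∀ i j : Fin n, Γ i j =
      if i = j then -(a i : ℝ) else if i = j + 1 then -(b i : ℝ) else 0)
    (hΓl : ∀ i j : Fin n, Γl i j = |Γ i j|) :
    Γ.det = (-1 : ℝ) ^ n * ((∏ i, (a i : ℝ)) - (-1 : ℝ) ^ n * ∏ i, (b i : ℝ)) ∧
    Γl.det = (∏ i, (a i : ℝ)) + (-1 : ℝ) ^ (n + 1) * ∏ i, (b i : ℝ) ∧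
    (Even n → (∏ i, (a i : ℝ)) ≠ ∏ i, (b i : ℝ) →
      (Γ.det = (∏ i, (a i : ℝ)) - ∏ i, (b i : ℝ) ∧ Γ.det = Γl.det ∧
        0 < Γ.det * Γl.det)) := by
  obtain ⟨m, rfl⟩ := Nat.exists_eq_succ_of_ne_zero (NeZero.ne n)
  have hm : 1 ≤ m := by omega
  have hd1 : Γ.det = ∏ i, (-(a i : ℝ)) + (-1 : ℝ) ^ m * ∏ i, (-(b i : ℝ)) :=
    det_cyc m hm _ _ Γ hΓ
  have hd2 : Γl.det = ∏ i, (a i : ℝ) + (-1 : ℝ) ^ m * ∏ i, (b i : ℝ) := by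
    refine det_cyc m hm _ _ Γl (fun i j => ?_)
    rw [hΓl, hΓ]
    split_ifs <;> simp
  have hpa : ∏ i, (-(a i : ℝ)) = (-1 : ℝ) ^ (m+1) * ∏ i, (a i : ℝ) := by
    calc ∏ i, (-(a i : ℝ)) = ∏ i : Fin (m+1), (-1 : ℝ) * (a i : ℝ) := by
          exact Finset.prod_congr rfl (fun i _ => by ring)
      _ = (-1 : ℝ) ^ (m+1) * ∏ i, (a i : ℝ) := by
          rw [Finset.prod_mul_distrib, Finset.prod_const]
          simp
  have hpb : ∏ i, (-(b i : ℝ)) = (-1 : ℝ) ^ (m+1) * ∏ i, (b i : ℝ) := by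
    calc ∏ i, (-(b i : ℝ)) = ∏ i : Fin (m+1), (-1 : ℝ) * (b i : ℝ) := by
          exact Finset.prod_congr rfl (fun i _ => by ring)
      _ = (-1 : ℝ) ^ (m+1) * ∏ i, (b i : ℝ) := by
          rw [Finset.prod_mul_distrib, Finset.prod_const]
          simp
  have hsq : ((-1 : ℝ)) ^ (m+1) * (-1 : ℝ) ^ (m+1) = 1 := by
    rw [← pow_add]
    exact Even.neg_one_pow ⟨m+1, by ring⟩
  have hΓdet : Γ.det = (-1 : ℝ) ^ (m+1) * ∏ i, (a i : ℝ) - ∏ i, (b i : ℝ) := by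
    rw [hd1, hpa, hpb]
    have : (-1 : ℝ) ^ m * ((-1 : ℝ) ^ (m+1) * ∏ i, (b i : ℝ)) = -∏ i, (b i : ℝ) := by
      rw [← mul_assoc, ← pow_add]
      have : Odd (m + (m+1)) := ⟨m, by ring⟩
      rw [this.neg_one_pow]; ring
    rw [this]; ring
  have hpow : (-1 : ℝ) ^ (m + 1 + 1) = (-1 : ℝ) ^ m := by
    rw [pow_succ, pow_succ]; ring
  have goal1 : Γ.det = (-1 : ℝ) ^ (m+1) * ((∏ i, (a i : ℝ)) - (-1 : ℝ) ^ (m+1) * ∏ i, (b i : ℝ)) := by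
    rw [hΓdet, mul_sub, ← mul_assoc, hsq, one_mul]
  refine ⟨goal1, by rw [hd2, hpow], ?_⟩
  intro hev hne
  have hodd : Odd m := Nat.not_even_iff_odd.mp (Nat.even_add_one.mp hev)
  have h1 : (-1 : ℝ) ^ (m+1) = 1 := hev.neg_one_pow
  have h2 : (-1 : ℝ) ^ m = -1 := hodd.neg_one_pow
  have e1 : Γ.det = (∏ i, (a i : ℝ)) - ∏ i, (b i : ℝ) := by rw [hΓdet, h1, one_mul]
  have e2 : Γl.det = (∏ i, (a i : ℝ)) - ∏ i, (b i : ℝ) := by rw [hd2, h2]; ring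
  refine ⟨e1, by rw [e1, e2], ?_⟩
  rw [e1, e2]
  exact mul_self_pos.mpr (sub_ne_zero.mpr hne)
end

section
/- Let n ≥ 2 and fix j ∈ {1,…,n}. Let Γ be an n×n cyclic lower bidiagonal matrix with diagonal entries −a_i (a_i > 0), subdiagonal entries Γ(i+1,i) = ±b_{i+1}, and Γ(1,n) = ±b_1, and let Γ_l be the entrywise absolute value pattern obtained by replacing −a_i by a_i and each subdiagonal/corner entry by b_i or 0. Let Γ' be Γ with its j-th column replaced by −e_j (the negative j-th standard basis vector), and Γ_l' be Γ_l with its j-th column replaced by e_j. Then det Γ' · det Γ_l' = (−1)^n ∏_{i ≠ j} a_i², which is nonzero and has sign (−1)^n. -/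
open Finset

private lemma det_perm_tri {n : ℕ} (σ : Equiv.Perm (Fin n)) (M : Matrix (Fin n) (Fin n) ℝ)
    (h : ∀ k l : Fin n, k < l → M (σ k) (σ l) = 0) :
    M.det = ∏ k : Fin n, M (σ k) (σ k) := by
  rw [← Matrix.det_submatrix_equiv_self σ M]
  exact Matrix.det_of_lowerTriangular _ (fun i j hij => h _ _ hij)

/-- Replacing the `j`-th column of a CST stoichiometric matrix by `-e_j` and of its source
matrix by `e_j` (corresponding to the outflow reaction `X_j → 0`), the product of the
resulting determinants equals `(-1)^n ∏_{i ≠ j} a_i² ≠ 0`. -/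
theorem stmt_7 (n : ℕ) (hn : 2 ≤ n) [NeZero n] (j : Fin n) (a b : Fin n → ℝ)
    (ha : ∀ i, 0 < a i) (hb : ∀ i, 0 < b i)
    (ε : Fin n → ℝ) (hε : ∀ i, ε i = 1 ∨ ε i = -1)
    (Γ Γl : Matrix (Fin n) (Fin n) ℝ)
    (hΓ : ∀ i i' : Fin n, Γ i i' =
      if i = i' then -(a i) else if i = i' + 1 then ε i * b i else 0)
    (hΓl : ∀ i i' : Fin n, Γl i i' =
      if i = i' then a i else if i = i' + 1 ∧ ε i = -1 then b i else 0) :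
    (Γ.updateCol j (fun i => if i = j then -1 else 0)).det *
      (Γl.updateCol j (fun i => if i = j then 1 else 0)).det
      = (-1 : ℝ) ^ n * ∏ i ∈ univ.erase j, (a i) ^ 2 ∧
    (Γ.updateCol j (fun i => if i = j then -1 else 0)).det *
      (Γl.updateCol j (fun i => if i = j then 1 else 0)).det ≠ 0 := by
  obtain ⟨m, rfl⟩ : ∃ m, n = m + 1 := ⟨n - 1, by omega⟩
  set σ : Equiv.Perm (Fin (m + 1)) := Equiv.addLeft (j + 1) with hσdef
  have hσ : ∀ k, σ k = j + 1 + k := fun k => rfl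
  have hσlast : σ (Fin.last m) = j := by
    rw [hσ, add_assoc, add_comm 1 (Fin.last m), Fin.last_add_one, add_zero]
  have hσne : ∀ k, k ≠ Fin.last m → σ k ≠ j := by
    intro k hk hc
    exact hk (σ.injective (hc.trans hσlast.symm))
  -- key: for l ≠ last, k < l implies k ≠ l + 1
  have hkl1 : ∀ k l : Fin (m + 1), k < l → l ≠ Fin.last m → k ≠ l + 1 := by
    intro k l hkl hl hc
    have h1 : ((l + 1 : Fin (m + 1)) : ℕ) = (l : ℕ) + 1 :=
      Fin.val_add_one_of_lt (Fin.lt_last_iff_ne_last.2 hl)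
    have h2 : (k : ℕ) < l := hkl
    have h3 : (k : ℕ) = ((l + 1 : Fin (m + 1)) : ℕ) := congrArg Fin.val hc
    omega
  have hσsucc : ∀ k l : Fin (m + 1), σ k = σ l + 1 ↔ k = l + 1 := by
    intro k l
    have h : σ l + 1 = σ (l + 1) := by rw [hσ, hσ, add_assoc]
    rw [h, σ.apply_eq_iff_eq]
  -- the two updated matrices
  set M := Γ.updateCol j (fun i => if i = j then (-1 : ℝ) else 0) with hM
  set Ml := Γl.updateCol j (fun i => if i = j then (1 : ℝ) else 0) with hMl
  have htriM : ∀ k l : Fin (m + 1), k < l → M (σ k) (σ l) = 0 := by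
    intro k l hkl
    by_cases hl : l = Fin.last m
    · subst hl
      rw [hM, Matrix.updateCol_apply, if_pos hσlast,
        if_neg (hσne k (ne_of_lt hkl))]
    · rw [hM, Matrix.updateCol_apply, if_neg (hσne l hl), hΓ,
        if_neg (fun hc => (ne_of_lt hkl) (σ.injective hc)),
        if_neg (fun hc => hkl1 k l hkl hl ((hσsucc k l).1 hc))]
  have htriMl : ∀ k l : Fin (m + 1), k < l → Ml (σ k) (σ l) = 0 := by
    intro k l hkl
    by_cases hl : l = Fin.last m
    · subst hl
      rw [hMl, Matrix.updateCol_apply, if_pos hσlast,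
        if_neg (hσne k (ne_of_lt hkl))]
    · rw [hMl, Matrix.updateCol_apply, if_neg (hσne l hl), hΓl,
        if_neg (fun hc => (ne_of_lt hkl) (σ.injective hc)),
        if_neg (fun hc => hkl1 k l hkl hl ((hσsucc k l).1 hc.1))]
  -- diagonal entries
  have hdiagM : ∀ k, k ≠ Fin.last m → M (σ k) (σ k) = -a (σ k) := by
    intro k hk
    rw [hM, Matrix.updateCol_apply, if_neg (hσne k hk), hΓ, if_pos rfl]
  have hdiagMl : ∀ k, k ≠ Fin.last m → Ml (σ k) (σ k) = a (σ k) := by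
    intro k hk
    rw [hMl, Matrix.updateCol_apply, if_neg (hσne k hk), hΓl, if_pos rfl]
  have hdiagMlast : M (σ (Fin.last m)) (σ (Fin.last m)) = -1 := by
    rw [hM, Matrix.updateCol_apply, if_pos hσlast, if_pos hσlast]
  have hdiagMllast : Ml (σ (Fin.last m)) (σ (Fin.last m)) = 1 := by
    rw [hMl, Matrix.updateCol_apply, if_pos hσlast, if_pos hσlast]
  -- reindexing products over the erased sets
  have hre : ∀ f : Fin (m + 1) → ℝ,
      ∏ k ∈ univ.erase (Fin.last m), f (σ k) = ∏ i ∈ univ.erase j, f i := by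
    intro f
    rw [← Finset.prod_image (fun x _ y _ h => σ.injective h),
      Finset.image_erase σ.injective, Finset.image_univ_equiv, hσlast]
  have hdetM : M.det = (-1) * ∏ i ∈ univ.erase j, (-a i) := by
    rw [det_perm_tri σ M htriM,
      ← Finset.prod_erase_mul univ _ (mem_univ (Fin.last m)), hdiagMlast,
      mul_comm]
    congr 1
    rw [← hre (fun i => -a i)]
    exact Finset.prod_congr rfl fun k hk => hdiagM k (Finset.ne_of_mem_erase hk)
  have hdetMl : Ml.det = ∏ i ∈ univ.erase j, a i := by
    rw [det_perm_tri σ Ml htriMl,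
      ← Finset.prod_erase_mul univ _ (mem_univ (Fin.last m)), hdiagMllast,
      mul_one, ← hre (fun i => a i)]
    exact Finset.prod_congr rfl fun k hk => hdiagMl k (Finset.ne_of_mem_erase hk)
  have hcard : (univ.erase j).card = m := by
    rw [Finset.card_erase_of_mem (mem_univ j), Finset.card_univ, Fintype.card_fin]
    omega

  have hval : M.det * Ml.det = (-1 : ℝ) ^ (m + 1) * ∏ i ∈ univ.erase j, (a i) ^ 2 := by
    rw [hdetM, hdetMl]
    have h1 : ∏ i ∈ univ.erase j, (-a i) = (-1 : ℝ) ^ m * ∏ i ∈ univ.erase j, a i := by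
      calc ∏ i ∈ univ.erase j, (-a i) = ∏ i ∈ univ.erase j, ((-1 : ℝ) * a i) := by
            exact Finset.prod_congr rfl fun i _ => by ring
        _ = (∏ _i ∈ univ.erase j, (-1 : ℝ)) * ∏ i ∈ univ.erase j, a i :=
            Finset.prod_mul_distrib
        _ = _ := by rw [Finset.prod_const, hcard]
    rw [h1, Finset.prod_pow]
    ring
  refine ⟨hval, hval ▸ ?_⟩
  apply mul_ne_zero
  · exact pow_ne_zero _ (by norm_num)
  · exact Finset.prod_ne_zero_iff.2 fun i _ => pow_ne_zero _ (ne_of_gt (ha i))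
end

section
/- Let n ≥ 2 and let a_1,…,a_n ≥ 1, b_1,…,b_n ≥ 1 be reals. Let Γ be the n×n matrix with Γ(i,i) = −a_i, with Γ(i+1,i) ∈ {−b_{i+1}, +b_{i+1}} and Γ(1,n) ∈ {−b_1, +b_1}, and zeros elsewhere; let Γ_l be the n×n matrix with Γ_l(i,i) = a_i, with Γ_l(i+1,i) = b_{i+1} whenever Γ(i+1,i) = −b_{i+1} and Γ_l(i+1,i) = 0 otherwise, and similarly for position (1,n). Let M be any n×n real matrix whose entries have the same sign pattern as Γ_l (positive where Γ_l is positive, zero where Γ_l is zero). Then for all index sets α, β ⊆ {1,…,n} with |α| = |β| < n, one has (−1)^{|α|} · Γ[α|β] · M[α|β] ≥ 0. -/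
open Finset

open Fin.NatCast in
private lemma chain_false {n k : ℕ} (hn : 2 ≤ n) [NeZero n] (hk : k < n)
    (r c : Fin k → Fin n) (hr : Function.Injective r) (hc : Function.Injective c)
    (σ τ : Equiv.Perm (Fin k))
    (hσ : ∀ i, r (σ i) = c i ∨ r (σ i) = c i + 1)
    (hτ : ∀ i, r (τ i) = c i ∨ r (τ i) = c i + 1)
    (i0 : Fin k) (h1 : r (σ i0) = c i0) (h2 : r (τ i0) = c i0 + 1) : False := by
  have hone : (1 : Fin n) ≠ 0 := by
    intro h
    have := Fin.one_eq_zero_iff.mp h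
    omega
  have hne : ∀ v : Fin n, v + 1 ≠ v := by
    intro v h
    apply hone
    have : v + 1 = v + 0 := by rw [add_zero]; exact h
    exact add_left_cancel this
  have H : ∀ m : ℕ, ∃ j, c j = c i0 - (m : Fin n) ∧ r (σ j) = c j ∧ r (τ j) = c j + 1 := by
    intro m
    induction m with
    | zero =>
      refine ⟨i0, ?_, h1, h2⟩
      simp
    | succ m ih =>
      obtain ⟨j, hcj, hsj, htj⟩ := ih
      obtain ⟨j', hj'⟩ : ∃ j', τ j' = σ j := ⟨τ⁻¹ (σ j), by simp⟩
      have hrj' : r (τ j') = c j := by rw [hj', hsj]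
      rcases hτ j' with h | h
      · -- then c j' = c j, so j' = j, contradiction
        have hjj : j' = j := hc (by rw [← h, hrj'])
        rw [hjj] at hj'
        rw [hj', hsj] at htj
        exact (hne _ htj.symm).elim
      · -- c j' + 1 = c j
        have hcj' : c j' = c j - 1 := by
          have : c j' + 1 = c j := by rw [← h, hrj']
          exact eq_sub_of_add_eq this
        have hτj' : r (τ j') = c j' + 1 := h
        have hσj' : r (σ j') = c j' := by
          rcases hσ j' with h' | h'
          · exact h'
          · exfalso
            have : r (σ j') = c j := by rw [h', hcj', sub_add_cancel]
            have hsig : σ j' = σ j := hr (by rw [this, hsj])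
            have hjj : j' = j := σ.injective hsig
            rw [hjj] at hcj'
            have h0 : c j + 1 = c j := by
              conv_lhs => rw [hcj']
              exact sub_add_cancel _ _
            exact hne _ h0
        refine ⟨j', ?_, hσj', hτj'⟩
        rw [hcj', hcj]
        push_cast
        rw [sub_sub]
  -- c is surjective: for any v, take m = (c i0 - v).val
  have hsurj : Function.Surjective c := by
    intro v
    obtain ⟨j, hj, -, -⟩ := H (c i0 - v).val
    refine ⟨j, ?_⟩
    rw [hj, Fin.cast_val_eq_self]
    exact sub_sub_cancel _ _
  have := Fintype.card_le_of_surjective c hsurj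
  simp at this
  omega

private lemma matching_unique {n k : ℕ} (hn : 2 ≤ n) [NeZero n] (hk : k < n)
    (r c : Fin k → Fin n) (hr : Function.Injective r) (hc : Function.Injective c)
    (σ τ : Equiv.Perm (Fin k))
    (hσ : ∀ i, r (σ i) = c i ∨ r (σ i) = c i + 1)
    (hτ : ∀ i, r (τ i) = c i ∨ r (τ i) = c i + 1) : σ = τ := by
  by_contra hne
  have : ∃ i, σ i ≠ τ i := by
    by_contra h
    push_neg at h
    exact hne (Equiv.ext h)
  obtain ⟨i, hi⟩ := this
  have hri : r (σ i) ≠ r (τ i) := fun h => hi (hr h)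
  rcases hσ i with h1 | h1 <;> rcases hτ i with h2 | h2
  · exact hri (h1.trans h2.symm)
  · exact chain_false hn hk r c hr hc σ τ hσ hτ i h1 h2
  · exact chain_false hn hk r c hr hc τ σ hτ hσ i h2 h1
  · exact hri (h1.trans h2.symm)

/-- For a closed CST with stoichiometric matrix `Γ` and source matrix `Γl`, and any matrix
`M` with the sign pattern of `Γl`, corresponding minors of size `< n` satisfy
`(-1)^{|α|} Γ[α|β] M[α|β] ≥ 0`. -/
theorem stmt_10 (n : ℕ) (hn : 2 ≤ n) [NeZero n] (a b : Fin n → ℝ)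
    (ha : ∀ i, 1 ≤ a i) (hb : ∀ i, 1 ≤ b i)
    (ε : Fin n → ℝ) (hε : ∀ i, ε i = 1 ∨ ε i = -1)
    (Γ Γl M : Matrix (Fin n) (Fin n) ℝ)
    (hΓ : ∀ i j : Fin n, Γ i j =
      if i = j then -(a i) else if i = j + 1 then ε i * b i else 0)
    (hΓl : ∀ i j : Fin n, Γl i j =
      if i = j then a i else if i = j + 1 ∧ ε i = -1 then b i else 0)
    (hM : ∀ i j : Fin n, (0 < Γl i j → 0 < M i j) ∧ (Γl i j = 0 → M i j = 0)) :
    ∀ (k : ℕ) (hk : k < n) (α β : Finset (Fin n)) (hα : α.card = k) (hβ : β.card = k),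
      0 ≤ (-1 : ℝ) ^ k *
        ((Γ.submatrix (α.orderEmbOfFin hα) (β.orderEmbOfFin hβ)).det *
         (M.submatrix (α.orderEmbOfFin hα) (β.orderEmbOfFin hβ)).det) := by
  -- basic sign facts about entries
  have key : ∀ x y : Fin n, M x y ≠ 0 →
      (x = y ∨ x = y + 1) ∧ Γ x y * M x y < 0 := by
    intro x y hxy
    have hΓ' := hΓ x y
    have hΓl' := hΓl x y
    have hM1 := (hM x y).1
    have hM2 := (hM x y).2
    by_cases hd : x = y
    · subst hd
      rw [if_pos rfl] at hΓl'
      rw [if_pos rfl] at hΓ'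
      have hMpos : 0 < M x x := hM1 (by rw [hΓl']; linarith [ha x])
      refine ⟨Or.inl rfl, ?_⟩
      rw [hΓ']
      have : 0 < a x := by linarith [ha x]
      exact mul_neg_of_neg_of_pos (by linarith) hMpos
    · by_cases hs : x = y + 1 ∧ ε x = -1
      · rw [if_neg hd, if_pos hs] at hΓl'
        rw [if_neg hd, if_pos hs.1] at hΓ'
        have hMpos : 0 < M x y := hM1 (by rw [hΓl']; linarith [hb x])
        refine ⟨Or.inr hs.1, ?_⟩
        rw [hΓ', hs.2]
        have : 0 < b x := by linarith [hb x]
        exact mul_neg_of_neg_of_pos (by linarith) hMpos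
      · exfalso
        apply hxy
        apply hM2
        rw [hΓl', if_neg hd, if_neg hs]
  have hΓzero : ∀ x y : Fin n, Γ x y ≠ 0 → x = y ∨ x = y + 1 := by
    intro x y h
    by_contra hcon
    push_neg at hcon
    rw [hΓ x y, if_neg hcon.1, if_neg hcon.2] at h
    exact h rfl
  intro k hk α β hα hβ
  set r : Fin k → Fin n := (α.orderEmbOfFin hα : Fin k → Fin n) with hrdef
  set c : Fin k → Fin n := (β.orderEmbOfFin hβ : Fin k → Fin n) with hcdef
  have hrinj : Function.Injective r := (α.orderEmbOfFin hα).injective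
  have hcinj : Function.Injective c := (β.orderEmbOfFin hβ).injective
  set A := Γ.submatrix (α.orderEmbOfFin hα) (β.orderEmbOfFin hβ) with hAdef
  set B := M.submatrix (α.orderEmbOfFin hα) (β.orderEmbOfFin hβ) with hBdef
  have hAentry : ∀ x y : Fin k, A x y = Γ (r x) (c y) := fun _ _ => rfl
  have hBentry : ∀ x y : Fin k, B x y = M (r x) (c y) := fun _ _ => rfl
  by_cases hex : ∃ σ0 : Equiv.Perm (Fin k), ∀ i, M (r (σ0 i)) (c i) ≠ 0
  · obtain ⟨σ0, hσ0⟩ := hex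
    have hmatch0 : ∀ i, r (σ0 i) = c i ∨ r (σ0 i) = c i + 1 :=
      fun i => (key _ _ (hσ0 i)).1
    have hBdet : B.det = Equiv.Perm.sign σ0 • ∏ i, M (r (σ0 i)) (c i) := by
      rw [Matrix.det_apply]
      rw [Finset.sum_eq_single_of_mem σ0 (Finset.mem_univ _)]
      · congr 1
      · intro σ _ hσne
        suffices h : ∏ i, B (σ i) i = 0 by rw [h, smul_zero]
        by_contra hprod
        have hz : ∀ i, M (r (σ i)) (c i) ≠ 0 := by
          intro i hi
          exact hprod (Finset.prod_eq_zero (Finset.mem_univ i) hi)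
        exact hσne (matching_unique hn hk r c hrinj hcinj σ σ0
          (fun i => (key _ _ (hz i)).1) hmatch0)
    have hAdet2 : A.det = Equiv.Perm.sign σ0 • ∏ i, Γ (r (σ0 i)) (c i) := by
      rw [Matrix.det_apply]
      rw [Finset.sum_eq_single_of_mem σ0 (Finset.mem_univ _)]
      · congr 1
      · intro σ _ hσne
        suffices h : ∏ i, A (σ i) i = 0 by rw [h, smul_zero]
        by_contra hprod
        have hz : ∀ i, Γ (r (σ i)) (c i) ≠ 0 := by
          intro i hi
          exact hprod (Finset.prod_eq_zero (Finset.mem_univ i) hi)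
        exact hσne (matching_unique hn hk r c hrinj hcinj σ σ0
          (fun i => hΓzero _ _ (hz i)) hmatch0)
    have hprodeq : A.det * B.det
        = ∏ i, (Γ (r (σ0 i)) (c i) * M (r (σ0 i)) (c i)) := by
      rw [hAdet2, hBdet, Finset.prod_mul_distrib]
      rcases Int.units_eq_one_or (Equiv.Perm.sign σ0) with h | h <;>
        simp [h]
    rw [hprodeq]
    have hneg : ∀ i : Fin k, Γ (r (σ0 i)) (c i) * M (r (σ0 i)) (c i) < 0 :=
      fun i => (key _ _ (hσ0 i)).2
    have hrw : (-1 : ℝ) ^ k * ∏ i, (Γ (r (σ0 i)) (c i) * M (r (σ0 i)) (c i))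
        = ∏ i, (-(Γ (r (σ0 i)) (c i) * M (r (σ0 i)) (c i))) := by
      calc (-1 : ℝ) ^ k * ∏ i, (Γ (r (σ0 i)) (c i) * M (r (σ0 i)) (c i))
          = (∏ _i : Fin k, (-1 : ℝ)) * ∏ i, (Γ (r (σ0 i)) (c i) * M (r (σ0 i)) (c i)) := by
            rw [Finset.prod_const, Finset.card_univ, Fintype.card_fin]
        _ = ∏ i, ((-1 : ℝ) * (Γ (r (σ0 i)) (c i) * M (r (σ0 i)) (c i))) :=
            (Finset.prod_mul_distrib).symm
        _ = ∏ i, (-(Γ (r (σ0 i)) (c i) * M (r (σ0 i)) (c i))) :=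
            Finset.prod_congr rfl (fun i _ => by ring)
    rw [hrw]
    apply Finset.prod_nonneg
    intro i _
    linarith [hneg i]
  · push_neg at hex
    have hBdet : B.det = 0 := by
      rw [Matrix.det_apply]
      apply Finset.sum_eq_zero
      intro σ _
      obtain ⟨i, hi⟩ := hex σ
      have : ∏ i, B (σ i) i = 0 := Finset.prod_eq_zero (Finset.mem_univ i) hi
      rw [this, smul_zero]
    rw [hBdet]
    simp
end

section
/- Let n ≥ 2 and let Γ be the stoichiometric matrix of a closed CST network with s sequestration reactions (diagonal entries −a_i; entry below the diagonal in column i equal to −b_{i+1} if reaction i is a sequestration and +b_{i+1} if a transmutation; corner entry Γ(1,n) = ∓b_1 accordingly). Then det Γ = (−1)^n ∏_{i=1}^n a_i + (−1)^{n+s+1} ∏_{i=1}^n b_i. In particular, Γ is singular if and only if s is even and ∏ a_i = ∏ b_i. -/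
open Finset

/-- Determinant of the stoichiometric matrix of a closed CST with `s` sequestrations:
`det Γ = (-1)^n ∏ a_i + (-1)^{n+s+1} ∏ b_i`; `Γ` is singular iff `s` is even and
`∏ a_i = ∏ b_i`. Reaction `j` is a sequestration iff `j ∈ S`. -/
theorem stmt_11 (n s : ℕ) (hn : 2 ≤ n) [NeZero n] (a b : Fin n → ℕ)
    (ha : ∀ i, 0 < a i) (hb : ∀ i, 0 < b i)
    (S : Finset (Fin n)) (hS : S.card = s)
    (Γ : Matrix (Fin n) (Fin n) ℝ)
    (hΓ : ∀ i j : Fin n, Γ i j =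
      if i = j then -(a i : ℝ)
      else if i = j + 1 then (if j ∈ S then -(b i : ℝ) else (b i : ℝ)) else 0) :
    Γ.det = (-1 : ℝ) ^ n * (∏ i, (a i : ℝ)) + (-1 : ℝ) ^ (n + s + 1) * ∏ i, (b i : ℝ) ∧
    (Γ.det = 0 ↔ (Even s ∧ (∏ i, (a i : ℝ)) = ∏ i, (b i : ℝ))) := by
  obtain ⟨m, rfl⟩ : ∃ m, n = m + 1 := ⟨n - 1, by omega⟩
  have hm : 1 ≤ m := by omega
  set τ : Equiv.Perm (Fin (m + 1)) := finRotate (m + 1) with hτ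
  have hτa : ∀ j : Fin (m + 1), τ j = j + 1 := finRotate_succ_apply
  have hne : ∀ j : Fin (m + 1), j + 1 ≠ j := by
    intro j h
    nth_rewrite 2 [← add_zero j] at h
    have h1 : (1 : Fin (m + 1)) = 0 := add_left_cancel h
    have h2 := congrArg Fin.val h1
    rw [Fin.val_one', Fin.val_zero, Nat.mod_eq_of_lt (by omega)] at h2
    exact one_ne_zero h2
  -- only `1` and `τ` can give a nonzero product
  have key : ∀ σ : Equiv.Perm (Fin (m + 1)), σ ≠ 1 → σ ≠ τ →
      ∃ j, σ j ≠ j ∧ σ j ≠ j + 1 := by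
    intro σ h1 h2
    by_contra hc
    push_neg at hc
    have hall : ∀ j, σ j = j ∨ σ j = j + 1 := by
      intro j
      by_cases h : σ j = j
      · exact Or.inl h
      · exact Or.inr (hc j h)
    by_cases hid : ∀ j, σ j = j
    · exact h1 (Equiv.ext hid)
    · push_neg at hid
      obtain ⟨j0, hj0⟩ := hid
      have hj0' : σ j0 = j0 + 1 := (hall j0).resolve_left hj0
      open Fin.NatCast in
      have step : ∀ k : ℕ, σ (j0 + (k : Fin (m + 1))) = j0 + (k : Fin (m + 1)) + 1 := by
        intro k
        induction k with
        | zero => simpa using hj0'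
        | succ k ih =>
          have hcast : ((k + 1 : ℕ) : Fin (m + 1)) = (k : Fin (m + 1)) + 1 := by
            push_cast; ring
          rw [hcast, ← add_assoc]
          rcases hall (j0 + (k : Fin (m + 1)) + 1) with h | h
          · exfalso
            have : j0 + (k : Fin (m + 1)) + 1 = j0 + (k : Fin (m + 1)) :=
              σ.injective (h.trans ih.symm)
            exact hne _ this
          · exact h
      apply h2
      apply Equiv.ext
      intro x
      have hx := step ((x - j0).val)
      rw [Fin.cast_val_eq_self, show j0 + (x - j0) = x from by abel] at hx
      rw [hτa]
      exact hx
  have hΓdiag : ∀ j, Γ j j = -(a j : ℝ) := fun j => by simp [hΓ]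
  have hΓsub : ∀ j : Fin (m + 1), Γ (j + 1) j =
      (if j ∈ S then -(b (j + 1) : ℝ) else (b (j + 1) : ℝ)) := by
    intro j
    rw [hΓ]
    simp [hne j]
  have h1τ : (1 : Equiv.Perm (Fin (m + 1))) ≠ τ := by
    intro h
    have := congrArg (fun e : Equiv.Perm (Fin (m + 1)) => e 0) h
    simp only [Equiv.Perm.one_apply, hτa] at this
    exact hne 0 this.symm
  -- the determinant formula
  have hbprod : (∏ j : Fin (m + 1), (b (j + 1) : ℝ)) = ∏ j, (b j : ℝ) :=
    Equiv.prod_comp (Equiv.addRight (1 : Fin (m + 1))) (fun j => (b j : ℝ))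
  have hdet : Γ.det = (-1 : ℝ) ^ (m + 1) * (∏ i, (a i : ℝ))
      + (-1 : ℝ) ^ (m + s) * ∏ i, (b i : ℝ) := by
    rw [Matrix.det_apply']
    rw [← Finset.sum_subset
      (Finset.subset_univ ({1, τ} : Finset (Equiv.Perm (Fin (m + 1)))))]
    · rw [Finset.sum_pair h1τ]
      have e1 : (∏ i, Γ ((1 : Equiv.Perm (Fin (m + 1))) i) i)
          = (-1 : ℝ) ^ (m + 1) * ∏ i, (a i : ℝ) := by
        simp only [Equiv.Perm.one_apply]
        calc (∏ i, Γ i i) = ∏ i, ((-1 : ℝ) * (a i : ℝ)) := by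
              refine Finset.prod_congr rfl fun i _ => ?_
              rw [hΓdiag i]; ring
          _ = (-1 : ℝ) ^ (m + 1) * ∏ i, (a i : ℝ) := by
              rw [Finset.prod_mul_distrib, Finset.prod_const, Finset.card_univ,
                Fintype.card_fin]
      have e2 : (∏ i, Γ (τ i) i) = (-1 : ℝ) ^ s * ∏ i, (b i : ℝ) := by
        calc (∏ i, Γ (τ i) i)
            = ∏ i, (if i ∈ S then -(b (i + 1) : ℝ) else (b (i + 1) : ℝ)) := by
              refine Finset.prod_congr rfl fun i _ => ?_
              rw [hτa i, hΓsub i]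
          _ = ∏ i, ((if i ∈ S then (-1 : ℝ) else 1) * (b (i + 1) : ℝ)) := by
              refine Finset.prod_congr rfl fun i _ => ?_
              split <;> ring
          _ = (∏ i, (if i ∈ S then (-1 : ℝ) else 1)) * ∏ i, (b (i + 1) : ℝ) :=
              Finset.prod_mul_distrib
          _ = (-1 : ℝ) ^ s * ∏ i, (b i : ℝ) := by
              rw [hbprod, Finset.prod_ite, Finset.prod_const, Finset.prod_const_one,
                mul_one, Finset.filter_mem_eq_inter, Finset.univ_inter, hS]
      rw [e1, e2, hτ, sign_finRotate, Equiv.Perm.sign_one]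
      simp only [Units.val_one, Int.cast_one, one_mul, Units.val_pow_eq_pow_val, Nat.add_sub_cancel,
        Units.val_neg, Int.cast_pow, Int.cast_neg, Int.cast_one]
      rw [pow_add]
      ring
    · intro σ _ hσ
      simp only [Finset.mem_insert, Finset.mem_singleton] at hσ
      push_neg at hσ
      obtain ⟨j, hj1, hj2⟩ := key σ hσ.1 hσ.2
      have hz : Γ (σ j) j = 0 := by rw [hΓ]; simp [hj1, hj2]
      have hp : (∏ i, Γ (σ i) i) = 0 := Finset.prod_eq_zero (Finset.mem_univ j) hz
      rw [hp, mul_zero]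
  have hexp : (-1 : ℝ) ^ (m + 1 + s + 1) = (-1 : ℝ) ^ (m + s) := by
    rw [show m + 1 + s + 1 = (m + s) + 2 by ring, pow_add]
    norm_num
  refine ⟨by rw [hdet, hexp], ?_⟩
  have hpa : 0 < ∏ i, (a i : ℝ) :=
    Finset.prod_pos fun i _ => by exact_mod_cast ha i
  have hpb : 0 < ∏ i, (b i : ℝ) :=
    Finset.prod_pos fun i _ => by exact_mod_cast hb i
  have hfac : Γ.det = (-1 : ℝ) ^ (m + 1)
      * ((∏ i, (a i : ℝ)) + (-1 : ℝ) ^ (s + 1) * ∏ i, (b i : ℝ)) := by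
    rw [hdet]
    have h2 : (-1 : ℝ) ^ (m + 1) * (-1 : ℝ) ^ (s + 1) = (-1 : ℝ) ^ (m + s) := by
      rw [← pow_add, show m + 1 + (s + 1) = (m + s) + 2 by ring, pow_add]
      norm_num
    rw [← h2]; ring
  rw [hfac]
  have hne1 : ((-1 : ℝ) ^ (m + 1)) ≠ 0 := pow_ne_zero _ (by norm_num)
  rw [mul_eq_zero]
  rcases Nat.even_or_odd s with hev | hod
  · have : (-1 : ℝ) ^ (s + 1) = -1 := Odd.neg_one_pow (hev.add_one)
    rw [this]
    constructor
    · rintro (h | h)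
      · exact absurd h hne1
      · exact ⟨hev, by linarith⟩
    · rintro ⟨-, h⟩
      right; rw [h]; ring
  · have : (-1 : ℝ) ^ (s + 1) = 1 := Even.neg_one_pow (hod.add_one)
    rw [this]
    constructor
    · rintro (h | h)
      · exact absurd h hne1
      · nlinarith
    · rintro ⟨h, -⟩
      exact absurd h (by simpa using hod)
end

section
/- Let n ≥ 2, let Γ be an n×n real matrix, K an n×k submatrix of the n×n identity formed by a subset of its columns (k ≥ 1), and let Γ̄ = [Γ | −K] (an n×(n+k) block matrix). For any β ⊆ {1,…,n+k} with |β| = n, write β = β₁ ∪ β₂ where β₁ indexes columns of Γ and β₂ indexes columns of −K; let γ ⊆ {1,…,n} be the rows corresponding (via K) to the columns β₂, and γ' its complement. Then Γ̄[{1,…,n}|β] = ε · (−1)^{|β₂|} · Γ[γ'|β₁] for a sign ε ∈ {−1,+1} depending only on (γ, β). Moreover, for a second n×(n+k) matrix Γ̄_l = [Γ_l | K], the product satisfies Γ̄[{1,…,n}|β] · Γ̄_l[{1,…,n}|β] = (−1)^{|β₂|} · Γ[γ'|β₁] · Γ_l[γ'|β₁]. -/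
open Finset

private lemma det_two_equiv {n : ℕ} {α : Type*} [Fintype α] [DecidableEq α]
    (σ τ : α ≃ Fin n) (M : Matrix (Fin n) (Fin n) ℝ) :
    (M.submatrix σ τ).det = ((Equiv.Perm.sign (σ.trans τ.symm) : ℤ) : ℝ) * M.det := by
  have h : M.submatrix σ τ = (M.submatrix τ τ).submatrix (σ.trans τ.symm) id := by
    ext i j
    simp [Matrix.submatrix_apply]
  rw [h, Matrix.det_permute, Matrix.det_submatrix_equiv_self]

/-- Laplace-expansion reduction of minors of the extended matrices `[Γ | -K]` and `[Γl | K]`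
(with `K` made of `k` distinct standard basis columns) to minors of `Γ` and `Γl`: selecting
columns `g₁` of `Γ` and columns `g₂` of `-K` (with `m + p = n`), and letting `r` enumerate the
complement `γ'` of the rows hit by the chosen `K`-columns, the `n × n` minor of `[Γ | -K]`
equals `ε (-1)^p Γ[γ'|β₁]` for a sign `ε`, and the product of corresponding minors equals
`(-1)^p Γ[γ'|β₁] Γl[γ'|β₁]`. -/
theorem stmt_14 (n k m p : ℕ) (hn : 2 ≤ n) (hk : 1 ≤ k) (hmp : m + p = n)
    (Γ Γl : Matrix (Fin n) (Fin n) ℝ)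
    (c : Fin k → Fin n) (hc : Function.Injective c)
    (K : Matrix (Fin n) (Fin k) ℝ) (hK : ∀ i t, K i t = if i = c t then 1 else 0)
    (e : Fin n ≃ (Fin m ⊕ Fin p))
    (g₁ : Fin m → Fin n) (hg₁ : Function.Injective g₁)
    (g₂ : Fin p → Fin k) (hg₂ : Function.Injective g₂)
    (r : Fin m → Fin n) (hr : Function.Injective r)
    (hcompl : ∀ i : Fin n, (∃ t, r t = i) ↔ ¬ ∃ s, c (g₂ s) = i) :
    (∃ ε : ℝ, (ε = 1 ∨ ε = -1) ∧
      ((Matrix.fromCols Γ (-K)).submatrix id (Sum.map g₁ g₂ ∘ e)).det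
        = ε * (-1 : ℝ) ^ p * (Γ.submatrix r g₁).det) ∧
    ((Matrix.fromCols Γ (-K)).submatrix id (Sum.map g₁ g₂ ∘ e)).det *
      ((Matrix.fromCols Γl K).submatrix id (Sum.map g₁ g₂ ∘ e)).det
      = (-1 : ℝ) ^ p * ((Γ.submatrix r g₁).det * (Γl.submatrix r g₁).det) := by
  classical
  -- the row bijection
  have hinj : Function.Injective (Sum.elim r (c ∘ g₂)) := by
    intro x y hxy
    cases x with
    | inl t =>
      cases y with
      | inl u => simp only [Sum.elim_inl] at hxy; exact congrArg Sum.inl (hr hxy)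
      | inr s =>
        exfalso
        simp only [Sum.elim_inl, Sum.elim_inr, Function.comp] at hxy
        exact ((hcompl (r t)).mp ⟨t, rfl⟩) ⟨s, hxy.symm⟩
    | inr s =>
      cases y with
      | inl u =>
        exfalso
        simp only [Sum.elim_inl, Sum.elim_inr, Function.comp] at hxy
        exact ((hcompl (r u)).mp ⟨u, rfl⟩) ⟨s, hxy⟩
      | inr s' =>
        simp only [Sum.elim_inr, Function.comp] at hxy
        exact congrArg Sum.inr (hg₂ (hc hxy))
  have hbij : Function.Bijective (Sum.elim r (c ∘ g₂)) := by
    refine (Fintype.bijective_iff_injective_and_card _).mpr ⟨hinj, ?_⟩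
    simp [hmp]
  set σeq : (Fin m ⊕ Fin p) ≃ Fin n := Equiv.ofBijective _ hbij with hσeq
  have hσl : ∀ t, σeq (Sum.inl t) = r t := fun t => rfl
  have hσr : ∀ s, σeq (Sum.inr s) = c (g₂ s) := fun s => rfl
  set π : Equiv.Perm (Fin m ⊕ Fin p) := σeq.trans ((e.symm : (Fin m ⊕ Fin p) ≃ Fin n).symm) with hπ
  set ε : ℝ := ((Equiv.Perm.sign π : ℤ) : ℝ) with hε
  have hεpm : ε = 1 ∨ ε = -1 := by
    rcases Int.units_eq_one_or (Equiv.Perm.sign π) with h | h <;> simp [hε, h]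
  have hε2 : ε * ε = 1 := by rcases hεpm with h | h <;> simp [h]
  -- block decompositions
  have hblk : ((Matrix.fromCols Γ (-K)).submatrix id (Sum.map g₁ g₂ ∘ e)).submatrix (σeq : (Fin m ⊕ Fin p) → Fin n) (e.symm : (Fin m ⊕ Fin p) → Fin n)
      = Matrix.fromBlocks (Γ.submatrix r g₁) 0 (Γ.submatrix (c ∘ g₂) g₁) (-1 : Matrix (Fin p) (Fin p) ℝ) := by
    ext i j
    cases i with
    | inl t =>
      cases j with
      | inl u => simp [Matrix.fromCols, hσl]
      | inr s =>
        have : r t ≠ c (g₂ s) := fun h => ((hcompl (r t)).mp ⟨t, rfl⟩) ⟨s, h.symm⟩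
        simp [Matrix.fromCols, hσl, hK, this]
    | inr s =>
      cases j with
      | inl u => simp [Matrix.fromCols, hσr]
      | inr s' =>
        by_cases h : s = s'
        · subst h; simp [Matrix.fromCols, hσr, hK, Matrix.one_apply]
        · have : c (g₂ s) ≠ c (g₂ s') := fun hcc => h (hg₂ (hc hcc))
          simp [Matrix.fromCols, hσr, hK, this, Matrix.one_apply, h]
  have hblkl : ((Matrix.fromCols Γl K).submatrix id (Sum.map g₁ g₂ ∘ e)).submatrix (σeq : (Fin m ⊕ Fin p) → Fin n) (e.symm : (Fin m ⊕ Fin p) → Fin n)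
      = Matrix.fromBlocks (Γl.submatrix r g₁) 0 (Γl.submatrix (c ∘ g₂) g₁) (1 : Matrix (Fin p) (Fin p) ℝ) := by
    ext i j
    cases i with
    | inl t =>
      cases j with
      | inl u => simp [Matrix.fromCols, hσl]
      | inr s =>
        have : r t ≠ c (g₂ s) := fun h => ((hcompl (r t)).mp ⟨t, rfl⟩) ⟨s, h.symm⟩
        simp [Matrix.fromCols, hσl, hK, this]
    | inr s =>
      cases j with
      | inl u => simp [Matrix.fromCols, hσr]
      | inr s' =>
        by_cases h : s = s'
        · subst h; simp [Matrix.fromCols, hσr, hK, Matrix.one_apply]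
        · have : c (g₂ s) ≠ c (g₂ s') := fun hcc => h (hg₂ (hc hcc))
          simp [Matrix.fromCols, hσr, hK, this, Matrix.one_apply, h]
  have hdetN : ((Matrix.fromCols Γ (-K)).submatrix id (Sum.map g₁ g₂ ∘ e)).det
      = ε * ((-1 : ℝ) ^ p * (Γ.submatrix r g₁).det) := by
    have key := det_two_equiv σeq e.symm
      ((Matrix.fromCols Γ (-K)).submatrix id (Sum.map g₁ g₂ ∘ e))
    -- compute the submatrix on the left
    have hsub : ((Matrix.fromCols Γ (-K)).submatrix id (Sum.map g₁ g₂ ∘ e)).submatrix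
        (σeq : (Fin m ⊕ Fin p) → Fin n) (e.symm : (Fin m ⊕ Fin p) → Fin n)
        = Matrix.fromBlocks (Γ.submatrix r g₁) 0 (Γ.submatrix (c ∘ g₂) g₁) (-1 : Matrix (Fin p) (Fin p) ℝ) := hblk
    rw [hsub] at key
    rw [Matrix.det_fromBlocks_zero₁₂] at key
    have hdneg : (-1 : Matrix (Fin p) (Fin p) ℝ).det = (-1 : ℝ) ^ p := by
      have : (-1 : Matrix (Fin p) (Fin p) ℝ) = -(1 : Matrix (Fin p) (Fin p) ℝ) := by ring
      rw [this, Matrix.det_neg]; simp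
    rw [hdneg, ← hπ, ← hε] at key
    have key' : ε * ((Γ.submatrix r g₁).det * (-1 : ℝ) ^ p)
        = ((Matrix.fromCols Γ (-K)).submatrix id (Sum.map g₁ g₂ ∘ e)).det := by
      rw [key, ← mul_assoc, hε2, one_mul]
    rw [← key']; ring
  have hdetNl : ((Matrix.fromCols Γl K).submatrix id (Sum.map g₁ g₂ ∘ e)).det
      = ε * (Γl.submatrix r g₁).det := by
    have key := det_two_equiv σeq e.symm
      ((Matrix.fromCols Γl K).submatrix id (Sum.map g₁ g₂ ∘ e))
    have hsub : ((Matrix.fromCols Γl K).submatrix id (Sum.map g₁ g₂ ∘ e)).submatrix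
        (σeq : (Fin m ⊕ Fin p) → Fin n) (e.symm : (Fin m ⊕ Fin p) → Fin n)
        = Matrix.fromBlocks (Γl.submatrix r g₁) 0 (Γl.submatrix (c ∘ g₂) g₁) (1 : Matrix (Fin p) (Fin p) ℝ) := hblkl
    rw [hsub, Matrix.det_fromBlocks_zero₁₂, Matrix.det_one, mul_one, ← hπ, ← hε] at key
    have key' : ε * (Γl.submatrix r g₁).det
        = ((Matrix.fromCols Γl K).submatrix id (Sum.map g₁ g₂ ∘ e)).det := by
      rw [key, ← mul_assoc, hε2, one_mul]
    rw [← key']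
  refine ⟨⟨ε, hεpm, by rw [hdetN]; ring⟩, ?_⟩
  rw [hdetN, hdetNl]
  have : ε * ((-1:ℝ)^p * (Γ.submatrix r g₁).det) * (ε * (Γl.submatrix r g₁).det)
      = (ε * ε) * ((-1:ℝ)^p * ((Γ.submatrix r g₁).det * (Γl.submatrix r g₁).det)) := by ring
  rw [this, hε2, one_mul]
end

section
/- Let n ≥ 2, s an even integer with 0 ≤ s < n, and a_1,…,a_n, b_1,…,b_n positive integers with ∏ a_i < ∏ b_i. Let Γ and Γ_l be the stoichiometric and source matrices of a closed CST network with s sequestrations, and let D₁ = diag(d_1,…,d_n) with d_i = (b_1⋯b_i)/(a_1⋯a_i). Then (−1)^n det(Γ) · det(D₁) · det(Γ_l) = (∏_{i=1}^n a_i − ∏_{i=1}^n b_i) · det(D₁) · ∏_{i=1}^n a_i < 0. Consequently, for all sufficiently small ε > 0, (−1)^n det(Γ D₁ Γ_lᵀ − ε I) < 0. -/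
open Finset

open Fin.NatCast Fin.CommRing in
lemma aux_classify {n : ℕ} [NeZero n] (h10 : (1 : Fin n) ≠ 0)
    (σ : Equiv.Perm (Fin n)) (h : ∀ i, σ i = i ∨ σ i = i + 1) :
    (∀ i, σ i = i) ∨ (∀ i, σ i = i + 1) := by
  by_cases hc : ∀ i, σ i = i
  · exact Or.inl hc
  push_neg at hc
  obtain ⟨i₀, hi₀⟩ := hc
  have hi₀' : σ i₀ = i₀ + 1 := (h i₀).resolve_left hi₀
  right
  have key : ∀ k : ℕ, σ (i₀ + (k : Fin n)) = i₀ + (k : Fin n) + 1 := by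
    intro k
    induction k with
    | zero => simpa using hi₀'
    | succ k ih =>
      have hcast : ((k+1 : ℕ) : Fin n) = (k : Fin n) + 1 := by push_cast; ring
      rw [hcast]
      rcases h (i₀ + ((k : Fin n) + 1)) with h' | h'
      · exfalso
        have heq : σ (i₀ + (k : Fin n)) = σ (i₀ + ((k : Fin n) + 1)) := by
          rw [ih, h']; ring
        have h3 : (k : Fin n) = (k : Fin n) + 1 := add_left_cancel (σ.injective heq)
        have : (1 : Fin n) = 0 := (left_eq_add.mp h3)
        exact h10 this
      · exact h'
  intro j
  have h4 := key (j - i₀).val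
  rw [Fin.cast_val_eq_self] at h4
  rwa [show i₀ + (j - i₀) = j from by ring] at h4

lemma det_cyclic_bidiag {m : ℕ} (M : Matrix (Fin (m+2)) (Fin (m+2)) ℝ)
    (h : ∀ i j, i ≠ j → i ≠ j + 1 → M i j = 0) :
    M.det = (∏ i, M i i) + (-1:ℝ)^(m+1) * ∏ i, M (i+1) i := by
  classical
  have h10 : (1 : Fin (m+2)) ≠ 0 := one_ne_zero
  rw [Matrix.det_apply]
  have hzero : ∀ σ ∈ (univ : Finset (Equiv.Perm (Fin (m+2)))),
      σ ∉ ({1, finRotate (m+2)} : Finset _) →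
      Equiv.Perm.sign σ • ∏ i, M (σ i) i = 0 := by
    intro σ _ hσ
    simp only [Finset.mem_insert, Finset.mem_singleton] at hσ
    push_neg at hσ
    have hex : ∃ i, M (σ i) i = 0 := by
      by_contra hall
      push_neg at hall
      have hor : ∀ i, σ i = i ∨ σ i = i + 1 := by
        intro i
        by_contra hi
        push_neg at hi
        exact hall i (h _ _ hi.1 hi.2)
      rcases aux_classify h10 σ hor with hid | hcy
      · exact hσ.1 (Equiv.ext hid)
      · exact hσ.2 (Equiv.ext fun i => by rw [hcy i, finRotate_succ_apply])
    obtain ⟨i, hi⟩ := hex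
    exact smul_eq_zero_of_right _ (Finset.prod_eq_zero (mem_univ i) hi)
  rw [← Finset.sum_subset (Finset.subset_univ {1, finRotate (m+2)}) hzero]
  have hne : (1 : Equiv.Perm (Fin (m+2))) ≠ finRotate (m+2) := by
    intro hEq
    have h0 : (1 : Equiv.Perm (Fin (m+2))) 0 = finRotate (m+2) 0 := by rw [hEq]
    simp [finRotate_succ_apply] at h0
  rw [Finset.sum_pair hne]
  simp [sign_finRotate, finRotate_succ_apply, Units.smul_def]

/-- For a closed CST with `s` even, `s < n`, and `∏ a < ∏ b`, the scaled determinant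
`(-1)^n det Γ · det D₁ · det Γl = (∏a - ∏b) · det D₁ · ∏a < 0`, and consequently
`(-1)^n det(Γ D₁ Γlᵀ - ε I) < 0` for all sufficiently small `ε > 0`. -/
theorem stmt_15 (n s : ℕ) (hn : 2 ≤ n) [NeZero n] (hs : Even s) (hsn : s < n)
    (a b : Fin n → ℕ) (ha : ∀ i, 0 < a i) (hb : ∀ i, 0 < b i)
    (hab : (∏ i, (a i : ℝ)) < ∏ i, (b i : ℝ))
    (S : Finset (Fin n)) (hS : S.card = s)
    (Γ Γl : Matrix (Fin n) (Fin n) ℝ)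
    (hΓ : ∀ i j : Fin n, Γ i j =
      if i = j then -(a i : ℝ)
      else if i = j + 1 then (if j ∈ S then -(b i : ℝ) else (b i : ℝ)) else 0)
    (hΓl : ∀ i j : Fin n, Γl i j =
      if i = j then (a i : ℝ)
      else if i = j + 1 ∧ j ∈ S then (b i : ℝ) else 0)
    (d : Fin n → ℝ)
    (hd : ∀ i : Fin n, d i = (∏ j ∈ Iic i, (b j : ℝ)) / ∏ j ∈ Iic i, (a j : ℝ))
    (D₁ : Matrix (Fin n) (Fin n) ℝ) (hD₁ : D₁ = Matrix.diagonal d) :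
    (-1 : ℝ) ^ n * (Γ.det * D₁.det * Γl.det)
        = ((∏ i, (a i : ℝ)) - ∏ i, (b i : ℝ)) * D₁.det * ∏ i, (a i : ℝ) ∧
    (-1 : ℝ) ^ n * (Γ.det * D₁.det * Γl.det) < 0 ∧
    ∃ ε₀ > 0, ∀ ε : ℝ, 0 < ε → ε < ε₀ →
      (-1 : ℝ) ^ n * (Γ * D₁ * Γl.transpose - ε • (1 : Matrix (Fin n) (Fin n) ℝ)).det < 0 := by
  obtain ⟨m, rfl⟩ : ∃ m, n = m + 2 := ⟨n - 2, by omega⟩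
  have hPa : (0:ℝ) < ∏ i, (a i : ℝ) :=
    Finset.prod_pos fun i _ => by exact_mod_cast ha i
  have hPb : (0:ℝ) < ∏ i, (b i : ℝ) :=
    Finset.prod_pos fun i _ => by exact_mod_cast hb i
  have hdetD : D₁.det = ∏ i, d i := by rw [hD₁, Matrix.det_diagonal]
  have hDpos : 0 < D₁.det := by
    rw [hdetD]
    refine Finset.prod_pos fun i _ => ?_
    rw [hd]
    exact div_pos (Finset.prod_pos fun j _ => by exact_mod_cast hb j)
      (Finset.prod_pos fun j _ => by exact_mod_cast ha j)
  have hne1 : ∀ i : Fin (m+2), i + 1 ≠ i := by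
    intro i h
    have h' : i + 1 = i + 0 := by simpa using h
    exact one_ne_zero (add_left_cancel h')
  -- determinant of Γ
  have hΓzero : ∀ i j : Fin (m+2), i ≠ j → i ≠ j + 1 → Γ i j = 0 := by
    intro i j h1 h2; rw [hΓ, if_neg h1, if_neg h2]
  have hΓdiag : ∀ i : Fin (m+2), Γ i i = -(a i : ℝ) := by
    intro i; rw [hΓ, if_pos rfl]
  have hΓsub : ∀ i : Fin (m+2), Γ (i+1) i =
      (if i ∈ S then (-1:ℝ) else 1) * (b (i+1) : ℝ) := by
    intro i
    rw [hΓ, if_neg (hne1 i), if_pos rfl]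
    by_cases hi : i ∈ S <;> simp [hi]
  have hsignS : ∏ i : Fin (m+2), (if i ∈ S then (-1:ℝ) else 1) = 1 := by
    rw [Finset.prod_ite_mem, Finset.univ_inter, Finset.prod_const, hS]
    exact Even.neg_one_pow hs
  have hshift : ∏ i : Fin (m+2), (b (i+1) : ℝ) = ∏ i, (b i : ℝ) := by
    exact Equiv.prod_comp (Equiv.addRight (1 : Fin (m+2))) fun i => (b i : ℝ)
  have hdetΓ : Γ.det = (-1:ℝ)^(m+2) * (∏ i, (a i:ℝ)) + (-1:ℝ)^(m+1) * ∏ i, (b i:ℝ) := by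
    rw [det_cyclic_bidiag Γ hΓzero]
    congr 1
    · simp only [hΓdiag]
      have : ∀ x : Fin (m+2), -(a x : ℝ) = (-1:ℝ) * (a x : ℝ) := fun x => by ring
      rw [Finset.prod_congr rfl fun x _ => this x, Finset.prod_mul_distrib,
        Finset.prod_const, Finset.card_univ, Fintype.card_fin]
    · congr 1
      simp only [hΓsub]
      rw [Finset.prod_mul_distrib, hsignS, hshift, one_mul]
  -- determinant of Γl
  have hΓlzero : ∀ i j : Fin (m+2), i ≠ j → i ≠ j + 1 → Γl i j = 0 := by
    intro i j h1 h2; rw [hΓl, if_neg h1, if_neg (by tauto)]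
  obtain ⟨i₀, hi₀⟩ : ∃ i : Fin (m+2), i ∉ S := by
    by_contra hc
    push_neg at hc
    have := Finset.eq_univ_iff_forall.mpr hc
    rw [this, Finset.card_univ, Fintype.card_fin] at hS
    omega
  have hdetΓl : Γl.det = ∏ i, (a i : ℝ) := by
    rw [det_cyclic_bidiag Γl hΓlzero]
    have h1 : ∀ i : Fin (m+2), Γl i i = (a i : ℝ) := fun i => by rw [hΓl, if_pos rfl]
    have h2 : Γl (i₀+1) i₀ = 0 := by
      rw [hΓl, if_neg (hne1 i₀), if_neg (by tauto)]
    have h3 : ∏ i : Fin (m+2), Γl (i+1) i = 0 :=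
      Finset.prod_eq_zero (Finset.mem_univ i₀) h2
    rw [h3]
    simp only [h1]
    ring
  have e1 : ((-1:ℝ))^(m+2) * (-1:ℝ)^(m+1) = -1 := by
    rw [← pow_add, show m+2+(m+1) = 2*(m+1)+1 from by ring, pow_succ, pow_mul]
    norm_num
  have e2 : ((-1:ℝ))^(m+2) * (-1:ℝ)^(m+2) = 1 := by
    rw [← pow_add, show m+2+(m+2) = 2*(m+2) from by ring, pow_mul]
    norm_num
  have hconj1 : (-1 : ℝ) ^ (m+2) * (Γ.det * D₁.det * Γl.det)
      = ((∏ i, (a i : ℝ)) - ∏ i, (b i : ℝ)) * D₁.det * ∏ i, (a i : ℝ) := by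
    rw [hdetΓ, hdetΓl]
    set Pa := ∏ i, (a i : ℝ)
    set Pb := ∏ i, (b i : ℝ)
    linear_combination (Pa * D₁.det * Pa) * e2 + (Pb * D₁.det * Pa) * e1
  have hconj2 : (-1 : ℝ) ^ (m+2) * (Γ.det * D₁.det * Γl.det) < 0 := by
    rw [hconj1]
    exact mul_neg_of_neg_of_pos
      (mul_neg_of_neg_of_pos (sub_neg.mpr hab) hDpos) hPa
  refine ⟨hconj1, hconj2, ?_⟩
  set A := Γ * D₁ * Γl.transpose with hA
  have hAdet : (-1:ℝ)^(m+2) * A.det < 0 := by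
    rw [hA, Matrix.det_mul, Matrix.det_mul, Matrix.det_transpose]
    exact hconj2
  have hcont : Continuous fun ε : ℝ => (-1:ℝ)^(m+2) * (A - ε • 1).det := by
    apply continuous_const.mul
    exact Continuous.matrix_det (continuous_const.sub (continuous_id.smul continuous_const))
  have h0mem : (0:ℝ) ∈ (fun ε : ℝ => (-1:ℝ)^(m+2) * (A - ε • 1).det) ⁻¹' Set.Iio 0 := by
    simp only [Set.mem_preimage, Set.mem_Iio, zero_smul, sub_zero]
    exact hAdet
  obtain ⟨δ, hδpos, hδ⟩ := Metric.isOpen_iff.mp (isOpen_Iio.preimage hcont) 0 h0mem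
  refine ⟨δ, hδpos, fun ε hε1 hε2 => ?_⟩
  have : ε ∈ Metric.ball (0:ℝ) δ := by
    rw [Metric.mem_ball, Real.dist_eq, sub_zero, abs_of_pos hε1]
    exact hε2
  exact hδ this
end
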